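/- The set {(t, 11·t, 121·t) : t ∈ ZMod 148} is an independent set of cardinality 148 in the third strong power E_{148/27}^{⊠3} of the fraction graph E_{148/27}; consequently the independence number of the third strong power of the 11-cycle satisfies α(C_11^{⊠3}) ≥ 148. -/

import Mathlib

open SimpleGraph

/-- The fraction graph `E_{p/q}` on vertex set `ZMod p`: distinct `u, v` are adjacent
iff the representative of `u - v` or of `v - u` in `{0, …, p-1}` is strictly less than `q`. -/
def fractionGraph (p q : ℕ) : SimpleGraph (ZMod p) where
  Adj u v := u ≠ v ∧ ((u - v).val < q ∨ (v - u).val < q)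
  symm := ⟨fun _ _ h => ⟨h.1.symm, h.2.symm⟩⟩
  loopless := ⟨fun _ h => h.1 rfl⟩

/-- The cycle graph `C_n` on vertex set `ZMod n`: `i` is adjacent to `i ± 1`. -/
def cycleGraphZMod (n : ℕ) : SimpleGraph (ZMod n) where
  Adj u v := u ≠ v ∧ (u - v = 1 ∨ v - u = 1)
  symm := ⟨fun _ _ h => ⟨h.1.symm, h.2.symm⟩⟩
  loopless := ⟨fun _ h => h.1 rfl⟩

/-- The strong product of two simple graphs. -/
def strongProd {α β : Type*} (G : SimpleGraph α) (H : SimpleGraph β) :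
    SimpleGraph (α × β) where
  Adj x y := x ≠ y ∧ (x.1 = y.1 ∨ G.Adj x.1 y.1) ∧ (x.2 = y.2 ∨ H.Adj x.2 y.2)
  symm := ⟨fun _ _ h => ⟨h.1.symm, h.2.1.imp Eq.symm (fun h' => h'.symm), h.2.2.imp Eq.symm (fun h' => h'.symm)⟩⟩
  loopless := ⟨fun _ h => h.1 rfl⟩

/-- The `n`-fold strong power of a simple graph. -/
def strongPow {α : Type*} (G : SimpleGraph α) (n : ℕ) : SimpleGraph (Fin n → α) where
  Adj u v := u ≠ v ∧ ∀ i, u i = v i ∨ G.Adj (u i) (v i)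
  symm := ⟨fun _ _ h => ⟨h.1.symm, fun i => (h.2 i).imp Eq.symm (fun h' => h'.symm)⟩⟩
  loopless := ⟨fun _ h => h.1 rfl⟩

/-- The strong product of a family of simple graphs. -/
def strongProdFamily {ι : Type*} {α : ι → Type*} (G : ∀ i, SimpleGraph (α i)) :
    SimpleGraph (∀ i, α i) where
  Adj u v := u ≠ v ∧ ∀ i, u i = v i ∨ (G i).Adj (u i) (v i)
  symm := ⟨fun _ _ h => ⟨h.1.symm, fun i => (h.2 i).imp Eq.symm (fun h' => h'.symm)⟩⟩
  loopless := ⟨fun _ h => h.1 rfl⟩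

/-- A finset of vertices is independent if its elements are pairwise non-adjacent. -/
def IsIndepFinset {α : Type*} (G : SimpleGraph α) (s : Finset α) : Prop :=
  ∀ u ∈ s, ∀ v ∈ s, u ≠ v → ¬ G.Adj u v

/-- The independence number of a graph: the greatest cardinality of an independent set. -/
noncomputable def indepNum {α : Type*} (G : SimpleGraph α) : ℕ :=
  sSup {n : ℕ | ∃ s : Finset α, IsIndepFinset G s ∧ s.card = n}

/-- A cohomomorphism from `G` to `H`: a map sending distinct non-adjacent vertices
to distinct non-adjacent vertices. -/
def IsCohom {α β : Type*} (G : SimpleGraph α) (H : SimpleGraph β) (f : α → β) : Prop :=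
  ∀ u v, u ≠ v → ¬ G.Adj u v → f u ≠ f v ∧ ¬ H.Adj (f u) (f v)

/-- Disjoint union of two simple graphs. -/
def disjUnion {α β : Type*} (G : SimpleGraph α) (H : SimpleGraph β) :
    SimpleGraph (α ⊕ β) where
  Adj x y := (∃ a b, x = Sum.inl a ∧ y = Sum.inl b ∧ G.Adj a b) ∨
             (∃ a b, x = Sum.inr a ∧ y = Sum.inr b ∧ H.Adj a b)
  symm := by
    refine ⟨?_⟩
    rintro x y (⟨a, b, rfl, rfl, h⟩ | ⟨a, b, rfl, rfl, h⟩)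
    · exact Or.inl ⟨b, a, rfl, rfl, h.symm⟩
    · exact Or.inr ⟨b, a, rfl, rfl, h.symm⟩
  loopless := by
    refine ⟨?_⟩
    rintro x (⟨a, b, rfl, heq, h⟩ | ⟨a, b, rfl, heq, h⟩) <;>
      · injection heq with h'
        subst h'
        exact h.ne rfl

/-- The open circle graph `E_r^o` on the circle `ℝ/ℤ`: distinct points are adjacent
iff their distance is strictly less than `1/r`. -/
noncomputable def openCircleGraph (r : ℝ) : SimpleGraph (AddCircle (1 : ℝ)) where
  Adj x y := x ≠ y ∧ dist x y < 1 / r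
  symm := ⟨fun x y h => ⟨h.1.symm, (dist_comm y x).trans_lt h.2⟩⟩
  loopless := ⟨fun _ h => h.1 rfl⟩

/-- The closed circle graph `E_r^c` on the circle `ℝ/ℤ`: distinct points are adjacent
iff their distance is at most `1/r`. -/
noncomputable def closedCircleGraph (r : ℝ) : SimpleGraph (AddCircle (1 : ℝ)) where
  Adj x y := x ≠ y ∧ dist x y ≤ 1 / r
  symm := ⟨fun x y h => ⟨h.1.symm, (dist_comm y x).trans_le h.2⟩⟩
  loopless := ⟨fun _ h => h.1 rfl⟩

/-- The Shannon capacity `Θ(G) = sup_{n ≥ 1} α(G^{⊠n})^{1/n}`. -/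
noncomputable def shannonCapacity {α : Type*} (G : SimpleGraph α) : ℝ :=
  ⨆ n : ℕ+, (_root_.indepNum (strongPow G n) : ℝ) ^ (((n : ℕ) : ℝ)⁻¹)

/-- The orbit set `{(t, 11t, 121t) : t ∈ ZMod 148}`. -/
def orbitSet148 : Set (Fin 3 → ZMod 148) :=
  {f | ∃ t : ZMod 148, f = fun i => (![1, 11, 121] : Fin 3 → ZMod 148) i * t}
set_option maxRecDepth 40000 in
private lemma key148 : ∀ d : ZMod 148, d ≠ 0 → ∃ i : Fin 3,
    27 ≤ ((![1, 11, 121] : Fin 3 → ZMod 148) i * d).val ∧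
    27 ≤ (-((![1, 11, 121] : Fin 3 → ZMod 148) i * d)).val := by decide

private lemma sepA (a b p q : ℕ) (ha : a < 148) (hb : b < 148)
    (hp1 : 148*p ≤ 11*a) (hp2 : 11*a < 148*p + 148)
    (hq1 : 148*q ≤ 11*b) (hq2 : 11*b < 148*q + 148)
    (h : (b + 27 ≤ a ∧ a ≤ b + 121) ∨ (a + 27 ≤ b ∧ b ≤ a + 121)) :
    p < 11 ∧ q < 11 ∧ ((q+2 ≤ p ∧ p ≤ q+9) ∨ (p+2 ≤ q ∧ q ≤ p+9)) := by omega

private lemma sepB (p q : ℕ) (hp : p < 11) (hq : q < 11)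
    (h : (q+2 ≤ p ∧ p ≤ q+9) ∨ (p+2 ≤ q ∧ q ≤ p+9)) :
    p ≠ q ∧ (p + 11 - q) % 11 ≠ 1 ∧ (q + 11 - p) % 11 ≠ 1 := by omega

private def phi148 (x : ZMod 148) : ZMod 11 := ((11 * x.val / 148 : ℕ) : ZMod 11)

private lemma val_sub148 (x y : ZMod 148) :
    (x - y).val = (x.val + 148 - y.val) % 148 := by
  have hy : y.val ≤ x.val + 148 := by have := ZMod.val_lt y; omega
  have h1 : x - y = ((x.val + 148 - y.val : ℕ) : ZMod 148) := by
    have h148 : (148 : ZMod 148) = 0 := by decide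
    push_cast [Nat.cast_sub hy, ZMod.natCast_val, ZMod.cast_id]
    rw [h148]
    ring
  rw [h1, ZMod.val_natCast]

private lemma phi_good (x y : ZMod 148) (h1 : 27 ≤ (x - y).val) (h2 : 27 ≤ (y - x).val) :
    phi148 x ≠ phi148 y ∧ ¬ (cycleGraphZMod 11).Adj (phi148 x) (phi148 y) := by
  have ha : x.val < 148 := ZMod.val_lt x
  have hb : y.val < 148 := ZMod.val_lt y
  rw [val_sub148] at h1 h2
  set a := x.val with hadef
  set b := y.val with hbdef
  have hd : (b + 27 ≤ a ∧ a ≤ b + 121) ∨ (a + 27 ≤ b ∧ b ≤ a + 121) := by omega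
  set p := 11 * a / 148 with hpdef
  set q := 11 * b / 148 with hqdef
  obtain ⟨hp11, hq11, hpq⟩ :=
    sepA a b p q ha hb (by omega) (by omega) (by omega) (by omega) hd
  obtain ⟨hne, hm1, hm2⟩ := sepB p q hp11 hq11 hpq
  have hx : phi148 x = ((p : ℕ) : ZMod 11) := rfl
  have hy' : phi148 y = ((q : ℕ) : ZMod 11) := rfl
  have h11 : (11 : ZMod 11) = 0 := by decide
  have cast_ne : ((p : ℕ) : ZMod 11) ≠ ((q : ℕ) : ZMod 11) := by
    intro h
    have := (ZMod.natCast_eq_natCast_iff _ _ _).mp h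
    simp only [Nat.ModEq] at this
    omega
  constructor
  · rw [hx, hy']; exact cast_ne
  · rintro ⟨-, hadj | hadj⟩
    · rw [hx, hy'] at hadj
      have : ((p + 11 - q : ℕ) : ZMod 11) = ((1 : ℕ) : ZMod 11) := by
        push_cast [Nat.cast_sub (show q ≤ p + 11 by omega)]
        rw [h11, add_zero]
        exact hadj
      have := (ZMod.natCast_eq_natCast_iff _ _ _).mp this
      simp only [Nat.ModEq] at this
      omega
    · rw [hx, hy'] at hadj
      have : ((q + 11 - p : ℕ) : ZMod 11) = ((1 : ℕ) : ZMod 11) := by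
        push_cast [Nat.cast_sub (show p ≤ q + 11 by omega)]
        rw [h11, add_zero]
        exact hadj
      have := (ZMod.natCast_eq_natCast_iff _ _ _).mp this
      simp only [Nat.ModEq] at this
      omega

private def g11 (t : ZMod 148) : Fin 3 → ZMod 11 :=
  fun i => phi148 ((![1, 11, 121] : Fin 3 → ZMod 148) i * t)

private lemma g11_sep {t s : ZMod 148} (h : t ≠ s) :
    ∃ i : Fin 3, g11 t i ≠ g11 s i ∧ ¬ (cycleGraphZMod 11).Adj (g11 t i) (g11 s i) := by
  obtain ⟨i, h1, h2⟩ := key148 (t - s) (sub_ne_zero.mpr h)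
  rw [mul_sub] at h1 h2
  rw [neg_sub] at h2
  exact ⟨i, phi_good _ _ h1 h2⟩

private lemma g11_inj : Function.Injective g11 := by
  intro t s h
  by_contra hne
  obtain ⟨i, hi, -⟩ := g11_sep hne
  exact hi (congrFun h i)

private def S148 : Finset (Fin 3 → ZMod 11) := Finset.image g11 Finset.univ

private lemma S148_card : S148.card = 148 := by
  rw [S148, Finset.card_image_of_injective _ g11_inj, Finset.card_univ, ZMod.card]

private lemma S148_indep : IsIndepFinset (strongPow (cycleGraphZMod 11) 3) S148 := by
  intro u hu v hv hne hadj
  obtain ⟨t, -, rfl⟩ := Finset.mem_image.mp hu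
  obtain ⟨s, -, rfl⟩ := Finset.mem_image.mp hv
  have hts : t ≠ s := fun h => hne (by rw [h])
  obtain ⟨i, hnei, hnadj⟩ := g11_sep hts
  rcases hadj.2 i with h | h
  · exact hnei h
  · exact hnadj h


/-- The set `{(t, 11t, 121t) : t ∈ ZMod 148}` is an independent set of cardinality 148 in
`E_{148/27}^{⊠3}`; consequently `α(C_11^{⊠3}) ≥ 148`. -/
theorem orbitSet148_isIndep_card_and_cycle11_bound :
    ((∀ u ∈ orbitSet148, ∀ v ∈ orbitSet148, u ≠ v →
        ¬ (strongPow (fractionGraph 148 27) 3).Adj u v) ∧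
      orbitSet148.ncard = 148) ∧
    148 ≤ _root_.indepNum (strongPow (cycleGraphZMod 11) 3) := by
  refine ⟨⟨?_, ?_⟩, ?_⟩
  · rintro u ⟨t, rfl⟩ v ⟨s, rfl⟩ hne ⟨-, hall⟩
    have hts : t ≠ s := by rintro rfl; exact hne rfl
    obtain ⟨i, h1, h2⟩ := key148 (t - s) (sub_ne_zero.mpr hts)
    rcases hall i with h | ⟨-, h | h⟩
    · have h0 : (![1, 11, 121] : Fin 3 → ZMod 148) i * (t - s) = 0 := by
        rw [mul_sub]; exact sub_eq_zero.mpr h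
      rw [h0] at h1
      simp [ZMod.val_zero] at h1
    · rw [show ((fun i => (![1, 11, 121] : Fin 3 → ZMod 148) i * t) i -
          (fun i => (![1, 11, 121] : Fin 3 → ZMod 148) i * s) i) =
          (![1, 11, 121] : Fin 3 → ZMod 148) i * (t - s) by rw [mul_sub]] at h
      omega
    · rw [show ((fun i => (![1, 11, 121] : Fin 3 → ZMod 148) i * s) i -
          (fun i => (![1, 11, 121] : Fin 3 → ZMod 148) i * t) i) =
          -((![1, 11, 121] : Fin 3 → ZMod 148) i * (t - s)) by rw [mul_sub, neg_sub]] at h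
      omega
  · have heq : orbitSet148 = ↑(Finset.image
        (fun t : ZMod 148 => fun i => (![1, 11, 121] : Fin 3 → ZMod 148) i * t)
        Finset.univ) := by
      ext f
      simp [orbitSet148, eq_comm]
    have hinj : Function.Injective
        (fun t : ZMod 148 => fun i => (![1, 11, 121] : Fin 3 → ZMod 148) i * t) := by
      intro t s h
      have := congrFun h 0
      simpa using this
    rw [heq, Set.ncard_coe_finset, Finset.card_image_of_injective _ hinj,
      Finset.card_univ, ZMod.card]
  · have hmem : (148 : ℕ) ∈ {n : ℕ | ∃ s : Finset (Fin 3 → ZMod 11),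
        IsIndepFinset (strongPow (cycleGraphZMod 11) 3) s ∧ s.card = n} :=
      ⟨S148, S148_indep, S148_card⟩
    refine le_csSup ⟨Fintype.card (Fin 3 → ZMod 11), ?_⟩ hmem
    rintro n ⟨s, -, rfl⟩
    exact s.card_le_univ
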